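/- arXiv:2206.11625 — 9 statements merged into one kernel-verified Lean document; each statement's English description precedes it below -/
import Mathlib

section
/- For every even natural number n ≥ 2, there exists a simple graph G on a vertex type of cardinality 2^n such that G is twin-free and the F2-rank of G equals n. -/
/-!
Take the vertices to be the vectors of `F₂^(m ⊕ m)` and join `u`, `v` when `ω(u, v) = 1`, where
`ω(u, v) = uᵀ J v` is the standard symplectic form. Since `ω` is alternating, this is a loopless
symmetric relation; since `ω` is nondegenerate, the neighbourhood of `u` determines the functional
`ω(u, ·)` and hence `u`. The adjacency matrix is `P J Pᵀ`, where the rows of `P` are all vectors;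
`P` contains the identity rows, so its rank is `rank J = 2m`.
-/

open Matrix

namespace Matrix

variable {ι R : Type*} [Fintype ι] [CommRing R]

def IsAlternating (J : Matrix ι ι R) : Prop := ∀ v, v ⬝ᵥ J *ᵥ v = 0

theorem IsAlternating.dotProduct_mulVec_swap {J : Matrix ι ι R} (hJ : J.IsAlternating)
    (u v : ι → R) : v ⬝ᵥ J *ᵥ u = -(u ⬝ᵥ J *ᵥ v) := by
  have h := hJ (u + v)
  simp only [mulVec_add, dotProduct_add, add_dotProduct, hJ u, hJ v] at h
  linear_combination h

theorem isAlternating_J (l : Type*) [Fintype l] [DecidableEq l] :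
    (J l R).IsAlternating := by
  intro v
  rw [← Sum.elim_comp_inl_inr v, J, fromBlocks_mulVec, sumElim_dotProduct_sumElim]
  simp [neg_mulVec, dotProduct_comm (v ∘ Sum.inr)]

theorem rank_mul_mul_eq_of_mul_eq_one [StrongRankCondition R] {m n k : Type*} [Fintype m]
    [Fintype n] [Fintype k] [DecidableEq n] {P : Matrix m n R} {K : Matrix n n R} {Q : Matrix n k R}
    {L : Matrix n m R} {S : Matrix k n R} (hL : L * P = 1) (hS : Q * S = 1) :
    (P * K * Q).rank = K.rank := by
  refine le_antisymm ((rank_mul_le_left _ _).trans (rank_mul_le_right _ _)) ?_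
  calc K.rank = (L * (P * K * Q) * S).rank := by
        simp only [Matrix.mul_assoc, hS, Matrix.mul_one, ← Matrix.mul_assoc L, hL, Matrix.one_mul]
    _ ≤ (P * K * Q).rank := (rank_mul_le_left _ _).trans (rank_mul_le_right _ _)

end Matrix

namespace SimpleGraph

variable {V W : Type*}

def TwinFree (G : SimpleGraph V) : Prop := ∀ u v, G.neighborSet u = G.neighborSet v → u = v

theorem TwinFree.comap_equiv {G : SimpleGraph W} (hG : G.TwinFree) (e : V ≃ W) :
    (G.comap e).TwinFree := by
  intro u v h
  simp only [neighborSet_comap] at h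
  exact e.injective (hG _ _ ((Set.preimage_eq_preimage e.surjective).mp h))

theorem adjMatrix_comap_equiv (R : Type*) [Zero R] [One R] (G : SimpleGraph W) [DecidableRel G.Adj]
    (e : V ≃ W) : (G.comap e).adjMatrix R = (G.adjMatrix R).submatrix e e := by
  ext u v
  simp [adjMatrix_apply]

end SimpleGraph

section AlternatingFormGraph

variable {ι : Type*} [Fintype ι] {J : Matrix ι ι (ZMod 2)}

def alternatingFormGraph (J : Matrix ι ι (ZMod 2)) (hJ : J.IsAlternating) :
    SimpleGraph (ι → ZMod 2) where
  Adj u v := u ⬝ᵥ J *ᵥ v = 1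
  symm := ⟨fun u v h => by rwa [hJ.dotProduct_mulVec_swap, ZMod.neg_eq_self_mod_two]⟩
  loopless := ⟨fun v h => by simp [hJ v] at h⟩

instance (hJ : J.IsAlternating) : DecidableRel (alternatingFormGraph J hJ).Adj :=
  fun u v => decEq (u ⬝ᵥ J *ᵥ v) 1

theorem adjMatrix_alternatingFormGraph_apply (hJ : J.IsAlternating) (u v : ι → ZMod 2) :
    (alternatingFormGraph J hJ).adjMatrix (ZMod 2) u v = u ⬝ᵥ J *ᵥ v := by
  have key : ∀ a : ZMod 2, (if a = 1 then 1 else 0) = a := by decide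
  exact key _

theorem alternatingFormGraph_twinFree (hJ : J.IsAlternating) (hsep : J.SeparatingLeft) :
    (alternatingFormGraph J hJ).TwinFree := by
  intro u v h
  have hval : ∀ w, u ⬝ᵥ J *ᵥ w = v ⬝ᵥ J *ᵥ w := by
    intro w
    rw [← adjMatrix_alternatingFormGraph_apply hJ, ← adjMatrix_alternatingFormGraph_apply hJ]
    simp only [SimpleGraph.adjMatrix_apply, ← SimpleGraph.mem_neighborSet, h]
  rw [← sub_eq_zero]
  exact separatingLeft_def.mp hsep _ fun w => by rw [sub_dotProduct, hval, sub_self]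

theorem rank_adjMatrix_alternatingFormGraph [DecidableEq ι] (hJ : J.IsAlternating) :
    ((alternatingFormGraph J hJ).adjMatrix (ZMod 2)).rank = J.rank := by
  let P : Matrix (ι → ZMod 2) ι (ZMod 2) := Matrix.of fun u => u
  let L : Matrix ι (ι → ZMod 2) (ZMod 2) := Matrix.of fun i u => if u = Pi.single i 1 then 1 else 0
  have hLP : L * P = 1 := by
    ext i j
    simp [L, P, mul_apply, one_apply, Pi.single_apply, eq_comm]
  have hA : (alternatingFormGraph J hJ).adjMatrix (ZMod 2) = P * J * Pᵀ := by
    ext u v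
    rw [adjMatrix_alternatingFormGraph_apply, dotProduct_mulVec]
    rfl
  rw [hA]
  exact rank_mul_mul_eq_of_mul_eq_one hLP (by rw [← transpose_mul, hLP, transpose_one])

end AlternatingFormGraph

theorem stmt_0_general (n : ℕ) (hn : Even n) :
    ∃ (G : SimpleGraph (Fin (2 ^ n))) (_ : DecidableRel G.Adj),
      (∀ u v : Fin (2 ^ n), G.neighborSet u = G.neighborSet v → u = v) ∧
      (G.adjMatrix (ZMod 2)).rank = n := by
  obtain ⟨m, rfl⟩ := hn
  have hJ := isAlternating_J (Fin m) (R := ZMod 2)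
  have hdet : IsUnit (J (Fin m) (ZMod 2)).det := isUnit_det_J _ _
  have hcard : Fintype.card (Fin (2 ^ (m + m))) = Fintype.card (Fin m ⊕ Fin m → ZMod 2) := by
    simp
  let e := Fintype.equivOfCardEq hcard
  refine ⟨(alternatingFormGraph _ hJ).comap e, inferInstance, ?_, ?_⟩
  · exact (alternatingFormGraph_twinFree hJ
      (nondegenerate_of_det_ne_zero hdet.ne_zero).separatingLeft).comap_equiv e
  · rw [SimpleGraph.adjMatrix_comap_equiv, rank_submatrix, rank_adjMatrix_alternatingFormGraph,
      rank_of_isUnit _ ((isUnit_iff_isUnit_det _).mpr hdet)]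
    simp

/-- For every even natural number `n ≥ 2`, there exists a simple graph `G` on a vertex type of
cardinality `2^n` such that `G` is twin-free and the `F2`-rank of `G` equals `n`. -/
theorem stmt_0 (n : ℕ) (hn : Even n) (hn2 : 2 ≤ n) :
    ∃ (G : SimpleGraph (Fin (2 ^ n))) (_ : DecidableRel G.Adj),
      (∀ u v : Fin (2 ^ n), G.neighborSet u = G.neighborSet v → u = v) ∧
      (G.adjMatrix (ZMod 2)).rank = n :=
  stmt_0_general n hn
end

section
/- For every natural number n > 4, the F2-rank of the line graph of the complete graph K_n is at most n−2 if n is even, and at most n−1 if n is odd. -/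
/-!
Over a field of characteristic two, the adjacency matrix of the line graph of any graph `G` is
`Bᵀ B`, where `B` is the vertex-edge incidence matrix: two distinct edges share at most one
vertex, and the diagonal entries are `2 = 0`. Every column of `B` has two ones, so the range of
`B` lies in the hyperplane `H = 𝟙^⊥` of dimension `n - 1`, and the rank of `Bᵀ B` is at most
`dim Bᵀ(H) ≤ n - 1`. When `n` is even, `𝟙` itself lies in `H` and is killed by `Bᵀ`, which lowers
the bound to `n - 2`.
-/

open Matrix Module

theorem Sym2.eq_of_mem_of_mem_of_ne {α : Type*} {e f : Sym2 α} (hef : e ≠ f) {u v : α}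
    (hue : u ∈ e) (huf : u ∈ f) (hve : v ∈ e) (hvf : v ∈ f) : u = v := by
  by_contra huv
  exact hef (((Sym2.mem_and_mem_iff huv).mp ⟨hue, hve⟩).trans
    ((Sym2.mem_and_mem_iff huv).mp ⟨huf, hvf⟩).symm)

theorem Matrix.rank_mul_le_finrank_map {l m n K : Type*} [Fintype m] [Fintype n] [Field K]
    (A : Matrix l m K) {B : Matrix m n K} {H : Submodule K (m → K)}
    (hB : LinearMap.range B.mulVecLin ≤ H) :
    (A * B).rank ≤ finrank K (H.map A.mulVecLin) := by
  rw [Matrix.rank, Matrix.mulVecLin_mul, LinearMap.range_comp]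
  exact Submodule.finrank_mono (Submodule.map_mono hB)

theorem Submodule.finrank_map_lt_of_mem_ker {K V W : Type*} [Field K] [AddCommGroup V]
    [Module K V] [AddCommGroup W] [Module K W] {p : Submodule K V} [FiniteDimensional K p]
    {f : V →ₗ[K] W} {v : V} (hvp : v ∈ p) (hv : v ≠ 0) (hvf : v ∈ LinearMap.ker f) :
    finrank K (p.map f) < finrank K p := by
  have hrank := (f.domRestrict p).finrank_range_add_finrank_ker
  rw [LinearMap.range_domRestrict] at hrank
  have hker : 0 < finrank K (LinearMap.ker (f.domRestrict p)) :=
    Module.finrank_pos_iff_exists_ne_zero.mpr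
      ⟨⟨⟨v, hvp⟩, by simpa using hvf⟩, by simpa [Subtype.ext_iff] using hv⟩
  omega

theorem Matrix.finrank_ker_dotProduct_one_add_one {α K : Type*} [Fintype α] [DecidableEq α]
    [Nonempty α] [Field K] :
    finrank K (LinearMap.ker (dotProductEquiv K α 1)) + 1 = Fintype.card α := by
  rw [Module.Dual.finrank_ker_add_one_of_ne_zero, Module.finrank_fintype_fun_eq_card]
  exact (dotProductEquiv K α).map_ne_zero_iff.mpr one_ne_zero

namespace SimpleGraph

variable {α : Type*} (G : SimpleGraph α) [DecidableEq α] [DecidableRel G.Adj]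

def edgeIncMatrix (R : Type*) [Zero R] [One R] : Matrix α G.edgeSet R :=
  (G.incMatrix R).submatrix id (↑)

variable [Fintype α]

theorem vecMul_one_edgeIncMatrix (R : Type*) [NonAssocSemiring R] [CharP R 2] :
    (1 : α → R) ᵥ* G.edgeIncMatrix R = 0 := by
  ext e
  simp only [vecMul, dotProduct, Pi.one_apply, one_mul, Pi.zero_apply, edgeIncMatrix,
    submatrix_apply, id]
  rw [sum_incMatrix_apply_of_mem_edgeSet G e.2]
  exact_mod_cast CharP.cast_eq_zero R 2

theorem lineGraph_adjMatrix_eq_transpose_mul (R : Type*) [NonAssocSemiring R] [CharP R 2]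
    [DecidableRel G.lineGraph.Adj] :
    G.lineGraph.adjMatrix R = (G.edgeIncMatrix R)ᵀ * G.edgeIncMatrix R := by
  ext e f
  by_cases hef : e = f
  · subst hef
    rw [edgeIncMatrix, transpose_submatrix, ← submatrix_mul _ _ _ _ _ Function.bijective_id,
      submatrix_apply, incMatrix_transpose_mul_diag, if_pos e.2, adjMatrix_apply,
      if_neg (G.lineGraph.irrefl)]
    exact_mod_cast (CharP.cast_eq_zero R 2).symm
  have hef' : (e : Sym2 α) ≠ f := fun h => hef (Subtype.ext h)
  have hmem : ∀ (a : α) (d : G.edgeSet), d.1 ∈ G.incidenceSet a ↔ a ∈ d.1 := fun a d =>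
    ⟨And.right, fun h => ⟨d.2, h⟩⟩
  simp only [adjMatrix_apply, lineGraph_adj_iff_exists, mul_apply, transpose_apply,
    edgeIncMatrix, submatrix_apply, id, incMatrix_apply', hmem, ite_zero_mul_ite_zero, one_mul,
    Finset.sum_boole, ne_eq, hef, not_false_eq_true, true_and]
  split_ifs with hshared
  · obtain ⟨v, hve, hvf⟩ := hshared
    rw [Finset.card_eq_one.mpr ⟨v, ?_⟩, Nat.cast_one]
    ext a
    simp only [Finset.mem_filter, Finset.mem_univ, true_and, Finset.mem_singleton]
    exact ⟨fun ⟨hae, haf⟩ => Sym2.eq_of_mem_of_mem_of_ne hef' hae haf hve hvf,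
      fun h => h ▸ ⟨hve, hvf⟩⟩
  · rw [Finset.card_eq_zero.mpr, Nat.cast_zero]
    exact Finset.filter_eq_empty_iff.mpr fun a _ h => hshared ⟨a, h⟩

variable {K : Type*} [Field K] [CharP K 2] [Fintype G.edgeSet] [DecidableRel G.lineGraph.Adj]

theorem rank_lineGraph_adjMatrix_le_finrank_map :
    (G.lineGraph.adjMatrix K).rank ≤
      finrank K ((LinearMap.ker (dotProductEquiv K α 1)).map (G.edgeIncMatrix K)ᵀ.mulVecLin) := by
  rw [lineGraph_adjMatrix_eq_transpose_mul]
  refine rank_mul_le_finrank_map _ ?_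
  rintro _ ⟨x, rfl⟩
  simp [dotProduct_mulVec, vecMul_one_edgeIncMatrix]

theorem rank_lineGraph_adjMatrix_le [Nonempty α] :
    (G.lineGraph.adjMatrix K).rank ≤ Fintype.card α - 1 := by
  have hdim := finrank_ker_dotProduct_one_add_one (α := α) (K := K)
  have hmap := Submodule.finrank_map_le (G.edgeIncMatrix K)ᵀ.mulVecLin
    (LinearMap.ker (dotProductEquiv K α 1))
  have hrank := G.rank_lineGraph_adjMatrix_le_finrank_map (K := K)
  omega

theorem rank_lineGraph_adjMatrix_le_of_even [Nonempty α] (h : Even (Fintype.card α)) :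
    (G.lineGraph.adjMatrix K).rank ≤ Fintype.card α - 2 := by
  have hdim := finrank_ker_dotProduct_one_add_one (α := α) (K := K)
  have hone : (1 : α → K) ∈ LinearMap.ker (dotProductEquiv K α 1) := by
    simpa using (CharP.cast_eq_zero_iff K 2 _).mpr h.two_dvd
  have hker : (1 : α → K) ∈ LinearMap.ker (G.edgeIncMatrix K)ᵀ.mulVecLin := by
    simp [vecMul_one_edgeIncMatrix]
  have hmap := Submodule.finrank_map_lt_of_mem_ker hone one_ne_zero hker
  have hrank := G.rank_lineGraph_adjMatrix_le_finrank_map (K := K)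
  omega

end SimpleGraph

open scoped Classical in
theorem stmt_2_general (n : ℕ) :
    ((SimpleGraph.lineGraph (⊤ : SimpleGraph (Fin n))).adjMatrix (ZMod 2)).rank ≤
      if Even n then n - 2 else n - 1 := by
  rcases Nat.eq_zero_or_pos n with rfl | hpos
  · exact (rank_le_card_width _).trans (by simp)
  have : Nonempty (Fin n) := ⟨⟨0, hpos⟩⟩
  split_ifs with h
  · simpa using (⊤ : SimpleGraph (Fin n)).rank_lineGraph_adjMatrix_le_of_even (K := ZMod 2)
      (by simpa using h)
  · simpa using (⊤ : SimpleGraph (Fin n)).rank_lineGraph_adjMatrix_le (K := ZMod 2)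

open scoped Classical in
/-- For every `n > 4`, the `F2`-rank of the line graph of the complete graph `K_n` is at most
`n - 2` if `n` is even, and at most `n - 1` if `n` is odd. -/
theorem stmt_2 (n : ℕ) (hn : 4 < n) :
    ((SimpleGraph.lineGraph (⊤ : SimpleGraph (Fin n))).adjMatrix (ZMod 2)).rank ≤
      if Even n then n - 2 else n - 1 :=
  stmt_2_general n
end

section
/- Let G be a finite simple graph with minimum degree strictly greater than 3. Then the line graph L(G) is twin-free, i.e., any two edges of G having the same neighbourhood in L(G) are equal. -/
/-! An edge `ab` whose endpoints both have degree at least `4` is recovered from its neighbourhood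
in the line graph: if every edge meeting `ab` also meets `f`, pick an edge `ax` with `x` neither
`b` nor an endpoint of `f` (possible since `a` has at least four neighbours); it meets `ab`, so it
meets `f`, which forces `a ∈ f`. Likewise `b ∈ f`, hence `f = ab`. -/

namespace SimpleGraph

variable {V : Type*} {G : SimpleGraph V}

theorem exists_adj_notMem_of_card_lt_degree (v : V) [Fintype (G.neighborSet v)] {s : Finset V}
    (hs : s.card < G.degree v) : ∃ x, G.Adj v x ∧ x ∉ s := by
  rw [← card_neighborFinset_eq_degree] at hs
  obtain ⟨x, hx, hxs⟩ := Finset.exists_mem_notMem_of_card_lt_card hs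
  exact ⟨x, (mem_neighborFinset G v x).mp hx, hxs⟩

theorem mem_of_lineGraph_neighborSet_subset {a b : V} (hab : s(a, b) ∈ G.edgeSet)
    {f : G.edgeSet} (h : G.lineGraph.neighborSet ⟨s(a, b), hab⟩ ⊆ G.lineGraph.neighborSet f)
    [Fintype (G.neighborSet a)] (ha : 3 < G.degree a) : a ∈ (f : Sym2 V) := by
  classical
  have hcard : (insert b (f : Sym2 V).toFinset).card < G.degree a := by
    grw [Finset.card_insert_le, Sym2.card_toFinset]
    split_ifs <;> omega
  obtain ⟨x, hax, hx⟩ := exists_adj_notMem_of_card_lt_degree a hcard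
  rw [Finset.mem_insert, Sym2.mem_toFinset, not_or] at hx
  have hxe : G.lineGraph.Adj ⟨s(a, b), hab⟩ ⟨s(a, x), hax⟩ :=
    lineGraph_adj_iff_exists.mpr
      ⟨fun heq => hx.1 (Sym2.congr_right.mp (congrArg Subtype.val heq)).symm,
        a, Sym2.mem_mk_left a b, Sym2.mem_mk_left a x⟩
  obtain ⟨-, v, hvf, hv⟩ := lineGraph_adj_iff_exists.mp (h hxe)
  rcases Sym2.mem_iff.mp hv with rfl | rfl
  · exact hvf
  · exact absurd hvf hx.2

theorem eq_of_lineGraph_neighborSet_subset {e f : G.edgeSet}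
    (h : G.lineGraph.neighborSet e ⊆ G.lineGraph.neighborSet f) [G.LocallyFinite]
    (hdeg : ∀ v ∈ (e : Sym2 V), 3 < G.degree v) : e = f := by
  obtain ⟨e, he⟩ := e
  induction e with
  | h a b =>
  have hba : s(b, a) ∈ G.edgeSet := by rwa [Sym2.eq_swap]
  have ha := mem_of_lineGraph_neighborSet_subset he h (hdeg a (Sym2.mem_mk_left a b))
  have hb := mem_of_lineGraph_neighborSet_subset hba (by simpa only [Sym2.eq_swap] using h)
    (hdeg b (Sym2.mem_mk_right a b))
  exact Subtype.ext ((Sym2.mem_and_mem_iff (G.ne_of_adj he)).mp ⟨ha, hb⟩).symm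

end SimpleGraph

theorem stmt_3_general {V : Type*} [Fintype V] (G : SimpleGraph V)
    [DecidableRel G.Adj] (hδ : 3 < G.minDegree) :
    ∀ e f : G.edgeSet,
      G.lineGraph.neighborSet e = G.lineGraph.neighborSet f → e = f :=
  fun _ _ h => G.eq_of_lineGraph_neighborSet_subset h.subset
    fun v _ => hδ.trans_le (G.minDegree_le_degree v)

/-- If `G` is a finite simple graph with minimum degree strictly greater than `3`, then the
line graph of `G` is twin-free. -/
theorem stmt_3 {V : Type*} [Fintype V] [DecidableEq V] (G : SimpleGraph V)
    [DecidableRel G.Adj] (hδ : 3 < G.minDegree) :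
    ∀ e f : G.edgeSet,
      G.lineGraph.neighborSet e = G.lineGraph.neighborSet f → e = f :=
  stmt_3_general G hδ
end

section
/- Let A be an n×n matrix and B an m×m matrix, both over F2 (ZMod 2). Then the rank over F2 of the parity product A ⊞ B is at most rank(A) + rank(B). -/
/-- The parity product `A ⊞ B` of two square matrices over `F2`: the entry at position
`((i,k),(j,l))` is `A i j + B k l`. -/
def parityProd {n m : ℕ} (A : Matrix (Fin n) (Fin n) (ZMod 2))
    (B : Matrix (Fin m) (Fin m) (ZMod 2)) :
    Matrix (Fin n × Fin m) (Fin n × Fin m) (ZMod 2) :=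
  Matrix.of fun p q => A p.1 q.1 + B p.2 q.2

lemma matrix_rank_add_le {p q : Type*} [Fintype p] [Fintype q] [DecidableEq q]
    {K : Type*} [Field K] (A B : Matrix p q K) :
    (A + B).rank ≤ A.rank + B.rank := by
  simp only [Matrix.rank]
  have hle : LinearMap.range (A + B).mulVecLin ≤
      LinearMap.range A.mulVecLin ⊔ LinearMap.range B.mulVecLin := by
    rintro x ⟨v, rfl⟩
    have : (A + B).mulVecLin v = A.mulVecLin v + B.mulVecLin v := by
      simp [Matrix.add_mulVec]
    rw [this]
    exact Submodule.add_mem_sup (LinearMap.mem_range_self _ v)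
      (LinearMap.mem_range_self _ v)
  exact le_trans (Submodule.finrank_mono hle)
    (Submodule.finrank_add_le_finrank_add_finrank _ _)

/-- The `F2`-rank of the parity product `A ⊞ B` is at most `rank A + rank B`. -/
theorem stmt_4 {n m : ℕ} (A : Matrix (Fin n) (Fin n) (ZMod 2))
    (B : Matrix (Fin m) (Fin m) (ZMod 2)) :
    (parityProd A B).rank ≤ A.rank + B.rank := by
  classical
  set E1 : Matrix (Fin n × Fin m) (Fin n) (ZMod 2) :=
    Matrix.of fun p i => if p.1 = i then 1 else 0 with hE1
  set F1 : Matrix (Fin n) (Fin n × Fin m) (ZMod 2) :=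
    Matrix.of fun j q => if q.1 = j then 1 else 0 with hF1
  set E2 : Matrix (Fin n × Fin m) (Fin m) (ZMod 2) :=
    Matrix.of fun p k => if p.2 = k then 1 else 0 with hE2
  set F2 : Matrix (Fin m) (Fin n × Fin m) (ZMod 2) :=
    Matrix.of fun l q => if q.2 = l then 1 else 0 with hF2
  have hsplit : parityProd A B = E1 * A * F1 + E2 * B * F2 := by
    ext p q
    simp [parityProd, Matrix.mul_apply, Finset.sum_ite_eq', hE1, hF1, hE2, hF2]
  calc (parityProd A B).rank ≤ (E1 * A * F1).rank + (E2 * B * F2).rank := by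
        rw [hsplit]; exact matrix_rank_add_le _ _
    _ ≤ A.rank + B.rank := by
        gcongr
        · exact le_trans (Matrix.rank_mul_le_left _ _)
            (Matrix.rank_mul_le_right _ _)
        · exact le_trans (Matrix.rank_mul_le_left _ _)
            (Matrix.rank_mul_le_right _ _)
end

section
/- For every m ≥ 1, the matrix A_m over F2 indexed by functions Fin m → Fin 4 is symmetric, has zero diagonal, has pairwise distinct rows (the row map i ↦ A_m i is injective), and has rank over F2 equal to 2m. -/
/-!
The rank of the parity product `(x, y) ↦ ∑ i, B (x i) (y i)` is bounded in both directions by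
general arguments. A factorisation `B = U * V` through `κ` factors it through `ι × κ`, so its
rank is at most `|ι| |κ|`; `A1` factors through `Fin 2`. Conversely, if the vertex `z` has zero
row and column (the isolated vertex), the vectors equal to `z` off a single coordinate cut out a
block-diagonal submatrix with `|ι|` copies of any principal submatrix of `B`, and two triangle
vertices give an invertible `2 × 2` block. Testing a row against the same vectors recovers each
row `B (x i)`, and the rows of `A1` are distinct.
-/

/-- The adjacency matrix of a triangle together with an isolated vertex, over `F2`. -/
def A1 : Matrix (Fin 4) (Fin 4) (ZMod 2) :=
  !![0,1,1,0; 1,0,1,0; 1,1,0,0; 0,0,0,0]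

/-- The adjacency matrix of the `m`-fold parity product of the triangle-plus-isolated-vertex
graph, indexed by functions `Fin m → Fin 4`. -/
def Am (m : ℕ) : Matrix (Fin m → Fin 4) (Fin m → Fin 4) (ZMod 2) :=
  Matrix.of fun x y => ∑ i : Fin m, A1 (x i) (y i)

open Matrix Function

namespace Matrix

variable {α R : Type*}

def parityProduct [AddCommMonoid R] (ι : Type*) [Fintype ι] (B : Matrix α α R) :
    Matrix (ι → α) (ι → α) R :=
  of fun x y => ∑ i, B (x i) (y i)

variable {ι κ : Type*} [Fintype ι]

section AddCommMonoid

variable [AddCommMonoid R] {B : Matrix α α R}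

@[simp]
theorem parityProduct_apply (B : Matrix α α R) (x y : ι → α) :
    parityProduct ι B x y = ∑ i, B (x i) (y i) :=
  rfl

theorem IsSymm.parityProduct (hB : B.IsSymm) : (parityProduct ι B).IsSymm := by
  ext x y
  simp only [transpose_apply, parityProduct_apply]
  exact Finset.sum_congr rfl fun i _ => hB.apply (x i) (y i)

theorem parityProduct_apply_self (hB : ∀ a, B a a = 0) (x : ι → α) :
    parityProduct ι B x x = 0 := by
  simp [hB]

variable [DecidableEq ι] {z : α}

theorem parityProduct_apply_update_const (hz : ∀ a, B a z = 0) (x : ι → α) (i : ι) (b : α) :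
    parityProduct ι B x (update (fun _ => z) i b) = B (x i) b := by
  rw [parityProduct_apply, Finset.sum_eq_single i (fun k _ hk => by simp [hk, hz]) (by simp)]
  simp

theorem parityProduct_injective (hz : ∀ a, B a z = 0) (hB : Injective B) :
    Injective (parityProduct ι B) := by
  intro x y hxy
  funext i
  refine hB (funext fun b => ?_)
  simpa only [parityProduct_apply_update_const hz] using
    congrFun hxy (update (fun _ => z) i b)

theorem submatrix_parityProduct_update_const (hzr : ∀ a, B z a = 0) (hzc : ∀ a, B a z = 0)
    (s : κ → α) :
    (parityProduct ι B).submatrix (fun p : κ × ι => update (fun _ => z) p.2 (s p.1))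
        (fun p => update (fun _ => z) p.2 (s p.1)) =
      blockDiagonal fun _ => B.submatrix s s := by
  ext ⟨j, i⟩ ⟨j', i'⟩
  rw [submatrix_apply, parityProduct_apply_update_const hzc, blockDiagonal_apply']
  by_cases h : i = i'
  · subst h; simp
  · simp [update_of_ne (Ne.symm h), h, hzr]

end AddCommMonoid

theorem parityProduct_mul [Fintype κ] [CommSemiring R] (U : Matrix α κ R) (V : Matrix κ α R) :
    parityProduct ι (U * V) =
      (of fun x (p : ι × κ) => U (x p.1) p.2 : Matrix (ι → α) (ι × κ) R) *
        (of fun p y => V p.2 (y p.1) : Matrix (ι × κ) (ι → α) R) := by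
  ext x y
  simp only [parityProduct_apply, mul_apply, Fintype.sum_prod_type, of_apply]

theorem rank_parityProduct_mul_le [Fintype κ] [DecidableEq ι] [Fintype α] [CommSemiring R]
    [StrongRankCondition R]
    (U : Matrix α κ R) (V : Matrix κ α R) :
    (parityProduct ι (U * V)).rank ≤ Fintype.card ι * Fintype.card κ := by
  rw [parityProduct_mul, ← Fintype.card_prod]
  exact (rank_mul_le_left _ _).trans (rank_le_card_width _)

theorem card_mul_le_rank_parityProduct [Fintype κ] [DecidableEq κ] [DecidableEq ι] [Fintype α]
    [CommRing R] [IsDomain R] {B : Matrix α α R} {z : α}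
    (hzr : ∀ a, B z a = 0) (hzc : ∀ a, B a z = 0) (s : κ → α) (hs : (B.submatrix s s).det ≠ 0) :
    Fintype.card κ * Fintype.card ι ≤ (parityProduct ι B).rank := by
  have hdet : (blockDiagonal fun _ : ι => B.submatrix s s).det ≠ 0 := by
    rw [det_blockDiagonal, Finset.prod_const]
    exact pow_ne_zero _ hs
  rw [← Fintype.card_prod, ← rank_of_det_ne_zero hdet,
    ← submatrix_parityProduct_update_const hzr hzc s]
  exact rank_submatrix_le _ _ _

end Matrix

theorem Am_eq_parityProduct (m : ℕ) : Am m = parityProduct (Fin m) A1 := rfl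

theorem A1_isSymm : A1.IsSymm := by decide

theorem A1_apply_self : ∀ a, A1 a a = 0 := by decide

theorem A1_apply_three : ∀ a, A1 a 3 = 0 := by decide

theorem A1_three_apply : ∀ a, A1 3 a = 0 := by decide

theorem A1_injective : Injective A1 := by
  have key : ∀ a b : Fin 4, A1 a 0 = A1 b 0 → A1 a 1 = A1 b 1 → a = b := by decide
  exact fun a b h => key a b (congrFun h 0) (congrFun h 1)

theorem A1_eq_mul :
    A1 = (!![0,1; 1,0; 1,1; 0,0] : Matrix (Fin 4) (Fin 2) (ZMod 2)) *
      (!![1,0,1,0; 0,1,1,0] : Matrix (Fin 2) (Fin 4) (ZMod 2)) := by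
  decide

theorem det_A1_submatrix : (A1.submatrix ![0, 1] ![0, 1]).det ≠ 0 := by
  rw [det_fin_two]; decide

theorem stmt_6_general (m : ℕ) :
    (Am m).IsSymm ∧ (∀ x, Am m x x = 0) ∧
      Function.Injective (fun x => Am m x) ∧ (Am m).rank = 2 * m := by
  rw [Am_eq_parityProduct]
  refine ⟨A1_isSymm.parityProduct, parityProduct_apply_self A1_apply_self,
    parityProduct_injective A1_apply_three A1_injective, le_antisymm ?_ ?_⟩
  · calc (parityProduct (Fin m) A1).rank ≤ Fintype.card (Fin m) * Fintype.card (Fin 2) := by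
          rw [A1_eq_mul]; exact rank_parityProduct_mul_le _ _
      _ = 2 * m := by simp [mul_comm]
  · calc 2 * m = Fintype.card (Fin 2) * Fintype.card (Fin m) := by simp
      _ ≤ (parityProduct (Fin m) A1).rank :=
          card_mul_le_rank_parityProduct A1_three_apply A1_apply_three _ det_A1_submatrix

/-- For every `m ≥ 1`, the matrix `A_m` is symmetric, has zero diagonal, has pairwise distinct
rows, and has `F2`-rank `2 * m`. -/
theorem stmt_6 (m : ℕ) (hm : 1 ≤ m) :
    (Am m).IsSymm ∧ (∀ x, Am m x x = 0) ∧
      Function.Injective (fun x => Am m x) ∧ (Am m).rank = 2 * m :=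
  stmt_6_general m
end

section
/- For every m ≥ 1 and every x : Fin m → Fin 4 with x not equal to the constant function 3 (equivalently, the row of A_m at x is nonzero), the row of A_m at x is balanced: the number of indices y with A_m x y = 1 equals 2^(2m−1), i.e., half of 4^m. -/
/-- A flipping involution on `Fin 4` depending on the row index. -/
def sig : Fin 4 → Fin 4 → Fin 4
  | 2, b => ![2,3,0,1] b
  | _, b => ![1,0,3,2] b

lemma sig_invol : ∀ a b : Fin 4, sig a (sig a b) = b := by decide

lemma sig_flip : ∀ a b : Fin 4, a ≠ 3 → A1 a (sig a b) = A1 a b + 1 := by decide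

lemma Am_update (m : ℕ) (x y : Fin m → Fin 4) (i₀ : Fin m) (c : Fin 4) :
    Am m x (Function.update y i₀ c) =
      A1 (x i₀) c + ∑ i ∈ Finset.univ \ {i₀}, A1 (x i) (y i) := by
  have h : (fun i => A1 (x i) (Function.update y i₀ c i)) =
      Function.update (fun i => A1 (x i) (y i)) i₀ (A1 (x i₀) c) := by
    funext i
    by_cases h : i = i₀
    · subst h; simp
    · simp [Function.update_of_ne h]
  simp only [Am, Matrix.of_apply, h]
  rw [Finset.sum_update_of_mem (Finset.mem_univ i₀)]

/-- For every `m ≥ 1` and every `x` other than the constant function `3` (i.e. whose row in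
`A_m` is nonzero), the row of `A_m` at `x` is balanced: it has exactly `2^(2m-1)` ones. -/
theorem stmt_8 (m : ℕ) (hm : 1 ≤ m) (x : Fin m → Fin 4) (hx : x ≠ fun _ => 3) :
    (Finset.univ.filter fun y => Am m x y = 1).card = 2 ^ (2 * m - 1) := by
  obtain ⟨i₀, hi₀⟩ : ∃ i, x i ≠ 3 := Function.ne_iff.mp hx
  set f : (Fin m → Fin 4) → (Fin m → Fin 4) :=
    fun y => Function.update y i₀ (sig (x i₀) (y i₀)) with hf
  have hAmy : ∀ y, Am m x y =
      A1 (x i₀) (y i₀) + ∑ i ∈ Finset.univ \ {i₀}, A1 (x i) (y i) := by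
    intro y
    have := Am_update m x y i₀ (y i₀)
    rwa [Function.update_eq_self] at this
  have hflip : ∀ y, Am m x (f y) = Am m x y + 1 := by
    intro y
    rw [hf, Am_update, sig_flip _ _ hi₀, hAmy y]
    ring
  have hfinv : ∀ y, f (f y) = y := by
    intro y
    funext i
    by_cases h : i = i₀
    · subst h; simp [hf, sig_invol]
    · simp [hf, Function.update_of_ne h]
  have hcard : (Finset.univ.filter fun y => Am m x y = 1).card
      = (Finset.univ.filter fun y => Am m x y = 0).card := by
    apply Finset.card_bij' (fun y _ => f y) (fun y _ => f y)
    · intro y hy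
      simp only [Finset.mem_filter, Finset.mem_univ, true_and] at hy ⊢
      rw [hflip, hy]; decide
    · intro y hy
      simp only [Finset.mem_filter, Finset.mem_univ, true_and] at hy ⊢
      rw [hflip, hy]; decide
    · intro y _; exact hfinv y
    · intro y _; exact hfinv y
  have hsplit : (Finset.univ.filter fun y => Am m x y = 1).card
      + (Finset.univ.filter fun y => Am m x y = 0).card
      = 4 ^ m := by
    have h0 : (Finset.univ.filter fun y => Am m x y = 0)
        = (Finset.univ.filter fun y => ¬ Am m x y = 1) := by
      apply Finset.filter_congr
      intro y _
      constructor
      · intro h; rw [h]; decide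
      · intro h
        have : Am m x y = 0 ∨ Am m x y = 1 := by
          generalize Am m x y = v
          revert v; decide
        tauto
    rw [h0, Finset.card_filter_add_card_filter_not]
    simp [Finset.card_univ]
  rw [← hcard] at hsplit
  have h4 : (4 : ℕ) ^ m = 2 ^ (2 * m) := by
    rw [show (4:ℕ) = 2^2 by norm_num, ← pow_mul]
  have h2 : 2 ^ (2 * m) = 2 * 2 ^ (2 * m - 1) := by
    rw [← pow_succ']
    congr 1
    omega
  omega
end

section
/- For every m ≥ 1, every pair of distinct x, y : Fin m → Fin 4 with neither x nor y equal to the constant function 3 (so that the rows of A_m at x and at y are nonzero and distinct), and every pair of values b, b' ∈ F2, the number of indices z with A_m x z = b and A_m y z = b' equals 4^(m−1), i.e., a quarter of 4^m. -/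
section StmtNine

def x4 : Fin 4 → Fin 4 → Fin 4 := ![![0,1,2,3],![1,0,3,2],![2,3,0,1],![3,2,1,0]]
lemma lx : ∀ a s t : Fin 4, A1 a (x4 s t) = A1 a s + A1 a t + A1 a 0 := by decide
lemma linv : ∀ s t : Fin 4, x4 (x4 s t) t = s := by decide
lemma l3 : ∀ v : Fin 4, A1 3 v + A1 3 0 = 0 := by decide
lemma lz : ∀ a : Fin 4, A1 a 0 + A1 a 0 = 0 := by decide
lemma lsingle : ∀ a : Fin 4, a ≠ 3 → ∀ s : ZMod 2, ∃ v, A1 a v + A1 a 0 = s := by decide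
lemma lpair : ∀ a a' : Fin 4, a ≠ a' → a ≠ 3 → a' ≠ 3 → ∀ s s' : ZMod 2,
    ∃ v, A1 a v + A1 a 0 = s ∧ A1 a' v + A1 a' 0 = s' := by decide
def D (m : ℕ) (x t : Fin m → Fin 4) : ZMod 2 := Am m x t + Am m x (fun _ => 0)
lemma D_eq_sum (m : ℕ) (x t : Fin m → Fin 4) :
    D m x t = ∑ i : Fin m, (A1 (x i) (t i) + A1 (x i) 0) := by
  simp [D, Am, Finset.sum_add_distrib]
lemma Am_trans (m : ℕ) (x z t : Fin m → Fin 4) :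
    Am m x (fun k => x4 (z k) (t k)) = Am m x z + D m x t := by
  rw [D_eq_sum]
  show (∑ i : Fin m, A1 (x i) (x4 (z i) (t i))) = Am m x z + _
  simp only [lx, Am, Matrix.of_apply, Finset.sum_add_distrib]
  ring

lemma card_trans (m : ℕ) (x y : Fin m → Fin 4) (b b' : ZMod 2) (t : Fin m → Fin 4) :
    (Finset.univ.filter fun z => Am m x z = b ∧ Am m y z = b').card =
    (Finset.univ.filter fun z => Am m x z = b + D m x t ∧ Am m y z = b' + D m y t).card := by
  apply Finset.card_bij' (fun z _ => fun k => x4 (z k) (t k)) (fun z _ => fun k => x4 (z k) (t k))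
  · intro z hz
    simp only [Finset.mem_filter, Finset.mem_univ, true_and] at hz ⊢
    rw [Am_trans, Am_trans, hz.1, hz.2]
    exact ⟨rfl, rfl⟩
  · intro z hz
    simp only [Finset.mem_filter, Finset.mem_univ, true_and] at hz ⊢
    rw [Am_trans, Am_trans, hz.1, hz.2]
    constructor <;> rw [add_assoc, CharTwo.add_self_eq_zero, add_zero]
  · intro z _; funext k; exact linv _ _
  · intro z _; funext k; exact linv _ _

/-- single-coordinate support -/
lemma D_single (m : ℕ) (x : Fin m → Fin 4) (i : Fin m) (v : Fin 4) :
    D m x (fun k => if k = i then v else 0) = A1 (x i) v + A1 (x i) 0 := by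
  rw [D_eq_sum]
  rw [Finset.sum_eq_single i]
  · simp
  · intro k _ hk; simp [hk, lz]
  · simp

lemma D_double (m : ℕ) (x : Fin m → Fin 4) (i j : Fin m) (hij : i ≠ j) (v w : Fin 4) :
    D m x (fun k => if k = i then v else if k = j then w else 0) =
      (A1 (x i) v + A1 (x i) 0) + (A1 (x j) w + A1 (x j) 0) := by
  rw [D_eq_sum]
  rw [← Finset.sum_subset (Finset.subset_univ ({i, j} : Finset (Fin m)))]
  · rw [Finset.sum_pair hij]
    simp [hij, hij.symm]
  · intro k _ hk
    simp only [Finset.mem_insert, Finset.mem_singleton, not_or] at hk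
    simp [hk.1, hk.2, lz]

lemma D_surj10 (m : ℕ) (x y : Fin m → Fin 4) (hxy : x ≠ y)
    (hx : x ≠ fun _ => 3) : ∃ t, D m x t = 1 ∧ D m y t = 0 := by
  by_cases h1 : ∃ i, x i ≠ 3 ∧ y i = 3
  · obtain ⟨i, hxi, hyi⟩ := h1
    obtain ⟨v, hv⟩ := lsingle (x i) hxi 1
    exact ⟨_, by rw [D_single]; exact hv, by rw [D_single, hyi]; exact l3 v⟩
  by_cases h2 : ∃ i, x i ≠ y i ∧ x i ≠ 3 ∧ y i ≠ 3
  · obtain ⟨i, hne, hxi, hyi⟩ := h2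
    obtain ⟨v, hv1, hv2⟩ := lpair (x i) (y i) hne hxi hyi 1 0
    exact ⟨_, by rw [D_single]; exact hv1, by rw [D_single]; exact hv2⟩
  · push_neg at h1 h2
    have key : ∀ i, x i = 3 ∨ x i = y i := by
      intro i
      by_cases hx3 : x i = 3
      · exact Or.inl hx3
      · right
        have hy3 := h1 i hx3
        by_contra hne
        exact hy3 (h2 i hne hx3)
    obtain ⟨i0, hi0⟩ := Function.ne_iff.mp hxy
    have hxi0 : x i0 = 3 := (key i0).resolve_right hi0
    have hyi0 : y i0 ≠ 3 := fun h => hi0 (hxi0.trans h.symm)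
    obtain ⟨j, hj⟩ := Function.ne_iff.mp hx
    have hxyj : x j = y j := (key j).resolve_left hj
    have hij : i0 ≠ j := fun h => hj (h ▸ hxi0)
    obtain ⟨v, hv⟩ := lsingle (y i0) hyi0 1
    obtain ⟨w, hw⟩ := lsingle (x j) hj 1
    refine ⟨fun k => if k = i0 then v else if k = j then w else 0, ?_, ?_⟩
    · rw [D_double m x i0 j hij, hxi0, l3, hw, zero_add]
    · rw [D_double m y i0 j hij, hv, ← hxyj, hw]
      decide

lemma D_surj (m : ℕ) (x y : Fin m → Fin 4) (hxy : x ≠ y)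
    (hx : x ≠ fun _ => 3) (hy : y ≠ fun _ => 3) (s s' : ZMod 2) :
    ∃ t, D m x t = s ∧ D m y t = s' := by
  obtain ⟨t1, ht1x, ht1y⟩ := D_surj10 m x y hxy hx
  obtain ⟨t2, ht2y, ht2x⟩ := D_surj10 m y x (Ne.symm hxy) hy
  -- combine via xor
  have comb : ∀ u w : Fin m → Fin 4, ∀ z : Fin m → Fin 4,
      D m z (fun k => x4 (u k) (w k)) = D m z u + D m z w := by
    intro u w z
    rw [D_eq_sum, D_eq_sum, D_eq_sum, ← Finset.sum_add_distrib]
    apply Finset.sum_congr rfl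
    intro i _
    rw [lx, add_assoc, add_assoc, CharTwo.add_self_eq_zero, add_zero,
      show (A1 (z i) (u i) + A1 (z i) 0) + (A1 (z i) (w i) + A1 (z i) 0) =
        (A1 (z i) (u i) + A1 (z i) (w i)) + (A1 (z i) 0 + A1 (z i) 0) from by ring,
      CharTwo.add_self_eq_zero, add_zero]
  -- now combine: targets (0,0),(1,0),(0,1),(1,1)
  have h00 : ∃ t, D m x t = 0 ∧ D m y t = 0 := by
    refine ⟨fun _ => 0, ?_, ?_⟩ <;> simp [D_eq_sum, lz]
  have h11 : ∃ t, D m x t = 1 ∧ D m y t = 1 := by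
    refine ⟨fun k => x4 (t1 k) (t2 k), ?_, ?_⟩ <;> rw [comb] <;>
      simp [ht1x, ht1y, ht2x, ht2y]
  fin_cases s <;> fin_cases s'
  · exact h00
  · exact ⟨t2, ht2x, ht2y⟩
  · exact ⟨t1, ht1x, ht1y⟩
  · exact h11

lemma card_const (m : ℕ) (x y : Fin m → Fin 4) (hxy : x ≠ y)
    (hx : x ≠ fun _ => 3) (hy : y ≠ fun _ => 3) (b b' : ZMod 2) :
    (Finset.univ.filter fun z => Am m x z = b ∧ Am m y z = b').card =
    (Finset.univ.filter fun z => Am m x z = 0 ∧ Am m y z = 0).card := by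
  obtain ⟨t, htx, hty⟩ := D_surj m x y hxy hx hy b b'
  rw [card_trans m x y b b' t, htx, hty, CharTwo.add_self_eq_zero, CharTwo.add_self_eq_zero]

/-- For every `m ≥ 1`, distinct `x, y` neither equal to the constant function `3`, and every
`b, b' ∈ F2`, the number of indices `z` with `A_m x z = b` and `A_m y z = b'` is `4^(m-1)`. -/
theorem stmt_9 (m : ℕ) (hm : 1 ≤ m) (x y : Fin m → Fin 4) (hxy : x ≠ y)
    (hx : x ≠ fun _ => 3) (hy : y ≠ fun _ => 3) (b b' : ZMod 2) :
    (Finset.univ.filter fun z => Am m x z = b ∧ Am m y z = b').card = 4 ^ (m - 1) := by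
  have hsum : (Finset.univ : Finset (Fin m → Fin 4)).card =
      ∑ p : ZMod 2 × ZMod 2,
        (Finset.univ.filter fun z => (Am m x z, Am m y z) = p).card :=
    Finset.card_eq_sum_card_fiberwise (fun z _ => Finset.mem_univ _)
  have heq : ∀ p : ZMod 2 × ZMod 2,
      (Finset.univ.filter fun z => (Am m x z, Am m y z) = p).card =
      (Finset.univ.filter fun z => Am m x z = 0 ∧ Am m y z = 0).card := by
    intro p
    rw [show (Finset.univ.filter fun z => (Am m x z, Am m y z) = p) =
        (Finset.univ.filter fun z => Am m x z = p.1 ∧ Am m y z = p.2) from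
      Finset.filter_congr fun z _ => by simp [Prod.ext_iff]]
    exact card_const m x y hxy hx hy p.1 p.2
  simp only [heq] at hsum
  simp only [Finset.sum_const, Finset.card_univ, Fintype.card_prod, ZMod.card,
    Fintype.card_fun, Fintype.card_fin, smul_eq_mul] at hsum
  rw [card_const m x y hxy hx hy b b']
  have h4 : 4 ^ m = 4 * 4 ^ (m - 1) := by
    conv_lhs => rw [show m = (m - 1) + 1 from (Nat.succ_pred_eq_of_pos hm).symm]
    ring
  omega

end StmtNine
end

section
/- Let n ≥ 2, let B be a symmetric 2^(n−1) × 2^(n−1) matrix over F2 with zero diagonal, and let u ∈ F2^(2^(n−1)). Define the 2^n × 2^n matrix A, indexed by Bool × Fin 2^(n−1), by A (b,i) (b',j) = B i j + (if b then u j else 0) + (if b' then u i else 0). Suppose that A has pairwise distinct rows, that the rank of A over F2 equals n, and that the top half of A (the matrix of rows A (false, i)) has rank n−1 over F2. Then u does not lie in the row space of B. -/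
/-- Let `n ≥ 2`, let `B` be a symmetric `2^(n-1) × 2^(n-1)` matrix over `F2` with zero
diagonal, and `u ∈ F2^(2^(n-1))`. Let `A` be the `2^n × 2^n` matrix (indexed by
`Bool × Fin 2^(n-1)`) with `A (b,i) (b',j) = B i j + (if b then u j else 0) +
(if b' then u i else 0)`. If `A` has pairwise distinct rows, `rank A = n`, and the top half
of `A` has rank `n - 1`, then `u` does not lie in the row space of `B`. -/
theorem stmt_15 (n : ℕ) (hn : 2 ≤ n)
    (B : Matrix (Fin (2 ^ (n - 1))) (Fin (2 ^ (n - 1))) (ZMod 2))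
    (hBsymm : B.IsSymm) (hBdiag : ∀ i, B i i = 0)
    (u : Fin (2 ^ (n - 1)) → ZMod 2)
    (A : Matrix (Bool × Fin (2 ^ (n - 1))) (Bool × Fin (2 ^ (n - 1))) (ZMod 2))
    (hA : ∀ (b : Bool) (i : Fin (2 ^ (n - 1))) (b' : Bool) (j : Fin (2 ^ (n - 1))),
      A (b, i) (b', j) = B i j + (if b then u j else 0) + (if b' then u i else 0))
    (hrows : Function.Injective fun p => A p)
    (hrank : A.rank = n)
    (htop : (Matrix.of fun i (q : Bool × Fin (2 ^ (n - 1))) => A (false, i) q).rank = n - 1) :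
    u ∉ Submodule.span (ZMod 2) (Set.range fun i => B i) := by
  intro hu
  obtain ⟨c, hc⟩ := (Submodule.mem_span_range_iff_exists_fun (ZMod 2)).mp hu
  have hcB : ∀ j, ∑ i, c i * B i j = u j := by
    intro j
    have := congrFun hc j
    simpa using this
  -- s := ∑ i, c i * u i = 0 since B is symmetric with zero diagonal
  have hs : ∑ i, c i * u i = 0 := by
    have key : ∑ i, c i * u i
        = ∑ p : Fin (2 ^ (n - 1)) × Fin (2 ^ (n - 1)), c p.1 * (c p.2 * B p.2 p.1) := by
      rw [Fintype.sum_prod_type]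
      refine Finset.sum_congr rfl fun i _ => ?_
      rw [← hcB i, Finset.mul_sum]
    rw [key]
    refine Finset.sum_ninvolution Prod.swap ?_ ?_ (fun _ => Finset.mem_univ _) ?_
    · intro p
      simp only [Prod.fst_swap, Prod.snd_swap]
      have h2 : B p.2 p.1 = B p.1 p.2 := congrFun (congrFun hBsymm p.1) p.2
      have h3 : c p.2 * (c p.1 * B p.1 p.2) = c p.1 * (c p.2 * B p.2 p.1) := by
        rw [h2]; ring
      rw [h3, ← two_mul, (by decide : (2 : ZMod 2) = 0), zero_mul]
    · intro p hp
      by_contra h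
      apply hp
      have h1 : p.2 = p.1 := congrArg Prod.fst h
      rw [h1, hBdiag]
      ring
    · intro p; exact Prod.swap_swap p
  -- The top half matrix
  set T : Matrix (Fin (2 ^ (n - 1))) (Bool × Fin (2 ^ (n - 1))) (ZMod 2) :=
    Matrix.of fun i (q : Bool × Fin (2 ^ (n - 1))) => A (false, i) q with hT
  -- Every row of A is in the span of rows of T
  have hspan : Submodule.span (ZMod 2) (Set.range A) ≤
      Submodule.span (ZMod 2) (Set.range T) := by
    rw [Submodule.span_le]
    rintro _ ⟨⟨b, i⟩, rfl⟩
    cases b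
    · exact Submodule.subset_span ⟨i, rfl⟩
    · have hAi : A (true, i) = T i + fun q : Bool × Fin (2 ^ (n - 1)) => u q.2 := by
        funext q
        obtain ⟨b', j⟩ := q
        have h1 := hA true i b' j
        have h2 := hA false i b' j
        simp only [Pi.add_apply, hT, Matrix.of_apply, h1, h2]
        cases b' <;> simp <;> ring
      rw [hAi]
      refine Submodule.add_mem _ (Submodule.subset_span ⟨i, rfl⟩) ?_
      have hw : (fun q : Bool × Fin (2 ^ (n - 1)) => u q.2) = ∑ k, c k • T k := by
        funext q
        obtain ⟨b', j⟩ := q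
        simp only [Finset.sum_apply, Pi.smul_apply, smul_eq_mul, hT, Matrix.of_apply, hA]
        symm
        cases b'
        · simpa using hcB j
        · have step : ∀ k ∈ Finset.univ,
              c k * (B k j + (if (false : Bool) then u j else 0) +
                (if (true : Bool) then u k else 0)) = c k * B k j + c k * u k := by
            intro k _; simp; ring
          rw [Finset.sum_congr rfl step, Finset.sum_add_distrib, hcB j, hs, add_zero]
      rw [hw]
      exact Submodule.sum_mem _ fun k _ => Submodule.smul_mem _ _ (Submodule.subset_span ⟨k, rfl⟩)
  have hle : A.rank ≤ T.rank := by
    rw [Matrix.rank_eq_finrank_span_row, Matrix.rank_eq_finrank_span_row]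
    exact Submodule.finrank_mono hspan
  rw [hrank, htop] at hle
  omega
end

section
/- Let n ≥ 2, let B be a symmetric 2^(n−1) × 2^(n−1) matrix over F2 with zero diagonal, and let u ∈ F2^(2^(n−1)). Define the 2^n × 2^n matrix A, indexed by Bool × Fin 2^(n−1), by A (b,i) (b',j) = B i j + (if b then u j else 0) + (if b' then u i else 0). Suppose that A has pairwise distinct rows, that the rank of A over F2 equals n, and that the top half of A (the matrix of rows A (false, i)) has rank n−1 over F2. Then the rank of B over F2 equals n − 2. -/
/-!
Over `F2` a symmetric matrix with zero diagonal is alternating, and an alternating form has even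
rank: a nondegenerate one splits off a hyperbolic plane `span {x, y}` with `B x y ≠ 0`, and its
orthogonal complement is again nondegenerate. Hence both `n = rank A` and `rank B` are even.
The top half of `A` is `B` with every column doubled, plus the rank-one matrix `u ⊗ (0, 𝟙)`, so
`rank B ≤ n - 1 ≤ rank B + 1`; since `n - 1` is odd, `rank B = n - 2`.
-/

open Module

namespace LinearMap.BilinForm

variable {K V : Type*} [Field K] [AddCommGroup V] [Module K V] {B : LinearMap.BilinForm K V}

theorem IsAlt.restrict (hB : B.IsAlt) (W : Submodule K V) : (B.restrict W).IsAlt :=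
  fun w => hB w

theorem IsAlt.eq_zero_of_apply_pair_eq_zero (hB : B.IsAlt) {x y : V} (hxy : B x y ≠ 0)
    {a b : K} (hx : B (a • x + b • y) x = 0) (hy : B (a • x + b • y) y = 0) :
    a = 0 ∧ b = 0 := by
  have hyx : B y x ≠ 0 := by rwa [← hB.neg_eq, neg_ne_zero]
  simp only [map_add, map_smul, LinearMap.add_apply, LinearMap.smul_apply, smul_eq_mul,
    hB.self_eq_zero, mul_zero, add_zero, zero_add] at hx hy
  exact ⟨(mul_eq_zero.1 hy).resolve_right hxy, (mul_eq_zero.1 hx).resolve_right hyx⟩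

theorem IsAlt.linearIndependent_pair (hB : B.IsAlt) {x y : V} (hxy : B x y ≠ 0) :
    LinearIndependent K ![x, y] :=
  LinearIndependent.pair_iff.2 fun a b hab =>
    hB.eq_zero_of_apply_pair_eq_zero hxy (by simp [hab]) (by simp [hab])

theorem IsAlt.nondegenerate_restrict_span_pair (hB : B.IsAlt) {x y : V} (hxy : B x y ≠ 0) :
    (B.restrict (Submodule.span K {x, y})).Nondegenerate := by
  refine ((hB.restrict _).isRefl.nondegenerate_iff_separatingLeft).2 ?_
  rintro ⟨z, hz⟩ hz0
  obtain ⟨a, b, rfl⟩ := Submodule.mem_span_pair.1 hz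
  obtain ⟨rfl, rfl⟩ := hB.eq_zero_of_apply_pair_eq_zero hxy
    (hz0 ⟨x, Submodule.subset_span (by simp)⟩) (hz0 ⟨y, Submodule.subset_span (by simp)⟩)
  simp

theorem IsAlt.even_finrank [FiniteDimensional K V] (hB : B.IsAlt) (hnd : B.Nondegenerate) :
    Even (finrank K V) := by
  induction h : finrank K V using Nat.strong_induction_on generalizing V with
  | _ N ih =>
  rcases N.eq_zero_or_pos with rfl | hpos
  · exact Even.zero
  have : Nontrivial V := finrank_pos_iff.1 (h ▸ hpos)
  obtain ⟨x, hx⟩ := exists_ne (0 : V)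
  obtain ⟨y, hxy⟩ : ∃ y, B x y ≠ 0 := by
    by_contra! hx0
    exact hx (hnd.1 x hx0)
  set U := Submodule.span K {x, y}
  have hU : finrank K U = 2 := by
    have := finrank_span_eq_card (hB.linearIndependent_pair hxy)
    rwa [Matrix.range_cons_cons_empty, Fintype.card_fin] at this
  have hUnd := hB.nondegenerate_restrict_span_pair hxy
  have hWnd : (B.restrict (B.orthogonal U)).Nondegenerate := by
    refine B.nondegenerate_restrict_of_disjoint_orthogonal hB.isRefl ?_
    rw [orthogonal_orthogonal hnd hB.isRefl]
    exact (isCompl_orthogonal_of_restrict_nondegenerate hB.isRefl hUnd).disjoint.symm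
  have hWdim : finrank K (B.orthogonal U) = N - 2 := by
    rw [finrank_orthogonal hnd, hU, h]
  have h2N : 2 ≤ N := h ▸ hU ▸ U.finrank_le
  obtain ⟨k, hk⟩ := ih (N - 2) (by omega) (hB.restrict _) hWnd hWdim
  exact ⟨k + 1, by omega⟩

theorem IsRefl.nondegenerate_restrict_of_isCompl_ker (hB : B.IsRefl) {W : Submodule K V}
    (hW : IsCompl W (LinearMap.ker B)) : (B.restrict W).Nondegenerate := by
  refine (IsRefl.nondegenerate_iff_separatingLeft (B := B.restrict W) fun a b => hB a b).2 ?_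
  rintro ⟨w, hw⟩ hw0
  suffices w ∈ LinearMap.ker B from Subtype.ext (Submodule.disjoint_def.1 hW.disjoint w hw this)
  ext v
  obtain ⟨w', hw', k, hk, rfl⟩ :=
    Submodule.mem_sup.1 (hW.sup_eq_top ▸ Submodule.mem_top (x := v))
  have hwk : B w k = 0 := hB k w (LinearMap.congr_fun (LinearMap.mem_ker.1 hk) w)
  simpa [hwk] using hw0 ⟨w', hw'⟩

theorem IsAlt.even_finrank_range [FiniteDimensional K V] (hB : B.IsAlt) :
    Even (finrank K (LinearMap.range B)) := by
  obtain ⟨W, hW⟩ := (LinearMap.ker B).exists_isCompl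
  have hrange : finrank K (LinearMap.range B) = finrank K W := by
    have := B.finrank_range_add_finrank_ker
    have := Submodule.finrank_add_eq_of_isCompl hW
    omega
  exact hrange ▸
    (hB.restrict W).even_finrank (hB.isRefl.nondegenerate_restrict_of_isCompl_ker hW.symm)

end LinearMap.BilinForm

namespace Matrix

theorem IsSymm.transpose_eq_neg {ι R : Type*} [Ring R] [CharP R 2] {M : Matrix ι ι R}
    (hM : M.IsSymm) : Mᵀ = -M := by
  rw [hM.eq]
  ext i j
  exact (CharTwo.neg_eq _).symm

theorem rank_add_le {m n K : Type*} [Field K] [Fintype n] (A B : Matrix m n K) :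
    (A + B).rank ≤ A.rank + B.rank := by
  rw [rank, rank, rank, mulVecLin_add]
  exact (Submodule.finrank_mono (LinearMap.range_add_le _ _)).trans
    (Submodule.finrank_add_le_finrank_add_finrank _ _)

section Alternating

variable {K ι : Type*} [Field K] [Fintype ι] [DecidableEq ι]

theorem isAlt_toBilin'_of_transpose_eq_neg {M : Matrix ι ι K} (hM : Mᵀ = -M)
    (hdiag : ∀ i, M i i = 0) : (toBilin' M).IsAlt := by
  intro x
  have hskew (i j : ι) : M j i = -M i j := by simpa using congr_fun₂ hM i j
  rw [toBilin'_apply', dotProduct_mulVec]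
  simp only [vecMul, dotProduct, Finset.sum_mul, ← Fintype.sum_prod_type']
  -- the terms at `(i, j)` and `(j, i)` cancel, and the diagonal terms vanish
  refine Finset.sum_involution (fun p _ => p.swap) (fun ⟨i, j⟩ _ => ?_)
    (fun ⟨i, j⟩ _ hne => ?_) (fun _ _ => Finset.mem_univ _) (fun _ _ => Prod.swap_swap _)
  · simp only [Prod.swap_prod_mk, hskew j i]
    ring
  · intro hij
    obtain rfl : i = j := (Prod.ext_iff.1 hij).2
    simp [hdiag] at hne

theorem ker_toBilin' (M : Matrix ι ι K) :
    LinearMap.ker (toBilin' M) = LinearMap.ker Mᵀ.mulVecLin := by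
  ext x
  simp only [LinearMap.mem_ker, LinearMap.ext_iff, toBilin'_apply', dotProduct_mulVec,
    LinearMap.zero_apply, dotProduct_eq_zero_iff, mulVecLin_apply, mulVec_transpose]

theorem even_rank_of_transpose_eq_neg {M : Matrix ι ι K} (hM : Mᵀ = -M)
    (hdiag : ∀ i, M i i = 0) : Even M.rank := by
  have h₁ := (toBilin' M).finrank_range_add_finrank_ker
  have h₂ := Mᵀ.mulVecLin.finrank_range_add_finrank_ker
  rw [ker_toBilin'] at h₁
  rw [← rank_transpose, rank]
  convert (isAlt_toBilin'_of_transpose_eq_neg hM hdiag).even_finrank_range using 1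
  omega

end Alternating

end Matrix

theorem stmt_16_general (n : ℕ)
    (B : Matrix (Fin (2 ^ (n - 1))) (Fin (2 ^ (n - 1))) (ZMod 2))
    (hBsymm : B.IsSymm) (hBdiag : ∀ i, B i i = 0)
    (u : Fin (2 ^ (n - 1)) → ZMod 2)
    (A : Matrix (Bool × Fin (2 ^ (n - 1))) (Bool × Fin (2 ^ (n - 1))) (ZMod 2))
    (hA : ∀ (b : Bool) (i : Fin (2 ^ (n - 1))) (b' : Bool) (j : Fin (2 ^ (n - 1))),
      A (b, i) (b', j) = B i j + (if b then u j else 0) + (if b' then u i else 0))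
    (hrank : A.rank = n)
    (htop : (Matrix.of fun i (q : Bool × Fin (2 ^ (n - 1))) => A (false, i) q).rank = n - 1) :
    B.rank = n - 2 := by
  set T := Matrix.of fun i (q : Bool × Fin (2 ^ (n - 1))) => A (false, i) q
  have hAsymm : A.IsSymm := by
    ext ⟨b, i⟩ ⟨b', j⟩
    simp only [Matrix.transpose_apply, hA, hBsymm.apply]
    ring
  have hAdiag (p) : A p p = 0 := by
    obtain ⟨b, i⟩ := p
    cases b <;> simp [hA, hBdiag, CharTwo.add_self_eq_zero]
  obtain ⟨k, hk⟩ : Even n :=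
    hrank ▸ Matrix.even_rank_of_transpose_eq_neg hAsymm.transpose_eq_neg hAdiag
  obtain ⟨r, hr⟩ := Matrix.even_rank_of_transpose_eq_neg hBsymm.transpose_eq_neg hBdiag
  have hBT : B.rank ≤ T.rank := by
    convert T.rank_submatrix_le id (Prod.mk false) using 2
    ext i j
    simp [T, hA]
  have hT : T = B.submatrix id Prod.snd + Matrix.vecMulVec u (fun q => if q.1 then 1 else 0) := by
    ext i ⟨b, j⟩
    cases b <;> simp [T, hA, Matrix.vecMulVec_apply]
  have hTB : T.rank ≤ B.rank + 1 := by
    rw [hT]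
    exact (Matrix.rank_add_le _ _).trans
      (add_le_add (B.rank_submatrix_le _ _) (Matrix.rank_vecMulVec_le _ _))
  omega

/-- Let `n ≥ 2`, let `B` be a symmetric `2^(n-1) × 2^(n-1)` matrix over `F2` with zero
diagonal, and `u ∈ F2^(2^(n-1))`. Let `A` be the `2^n × 2^n` matrix (indexed by
`Bool × Fin 2^(n-1)`) with `A (b,i) (b',j) = B i j + (if b then u j else 0) +
(if b' then u i else 0)`. If `A` has pairwise distinct rows, `rank A = n`, and the top half
of `A` has rank `n - 1`, then the rank of `B` over `F2` equals `n - 2`. -/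
theorem stmt_16 (n : ℕ) (hn : 2 ≤ n)
    (B : Matrix (Fin (2 ^ (n - 1))) (Fin (2 ^ (n - 1))) (ZMod 2))
    (hBsymm : B.IsSymm) (hBdiag : ∀ i, B i i = 0)
    (u : Fin (2 ^ (n - 1)) → ZMod 2)
    (A : Matrix (Bool × Fin (2 ^ (n - 1))) (Bool × Fin (2 ^ (n - 1))) (ZMod 2))
    (hA : ∀ (b : Bool) (i : Fin (2 ^ (n - 1))) (b' : Bool) (j : Fin (2 ^ (n - 1))),
      A (b, i) (b', j) = B i j + (if b then u j else 0) + (if b' then u i else 0))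
    (hrows : Function.Injective fun p => A p)
    (hrank : A.rank = n)
    (htop : (Matrix.of fun i (q : Bool × Fin (2 ^ (n - 1))) => A (false, i) q).rank = n - 1) :
    B.rank = n - 2 :=
  stmt_16_general n B hBsymm hBdiag u A hA hrank htop
end
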